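/- arXiv:2405.18222 — 5 statements merged into one kernel-verified Lean document; each statement's English description precedes it below -/
import Mathlib

section
/- Let n ∈ ℕ, let f : ℝⁿ → ℝ be continuously differentiable, bounded below, with L-Lipschitz continuous gradient (L > 0). Let c, C > 0, let (B_k)_{k∈ℕ} be real symmetric n×n matrices whose eigenvalues all lie in [c, C], let 0 < γ < 2/(C·L), and define x_{k+1} = x_k − γ·B_k·∇f(x_k) from any x_0 ∈ ℝⁿ. Then the series ∑_{k=0}^{∞} ⟨B_k·∇f(x_k), ∇f(x_k)⟩ converges (is finite). -/
open scoped RealInnerProductSpace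
open Filter

noncomputable def mulVecE {n : ℕ} (B : Matrix (Fin n) (Fin n) ℝ)
    (v : EuclideanSpace ℝ (Fin n)) : EuclideanSpace ℝ (Fin n) :=
  Matrix.toEuclideanLin B v
lemma mulVecE_basis {n : ℕ} {B : Matrix (Fin n) (Fin n) ℝ} (hB : B.IsHermitian) (j : Fin n) :
    mulVecE B (hB.eigenvectorBasis j) = hB.eigenvalues j • hB.eigenvectorBasis j := by
  unfold mulVecE
  rw [Matrix.toEuclideanLin_apply]
  ext i
  have := congrFun (hB.mulVec_eigenvectorBasis j) i
  simpa using this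

lemma repr_mulVecE {n : ℕ} {B : Matrix (Fin n) (Fin n) ℝ} (hB : B.IsHermitian)
    (v : EuclideanSpace ℝ (Fin n)) (i : Fin n) :
    hB.eigenvectorBasis.repr (mulVecE B v) i
      = hB.eigenvalues i * hB.eigenvectorBasis.repr v i := by
  set b := hB.eigenvectorBasis
  conv_lhs => rw [← b.sum_repr v]
  have hlin : mulVecE B (∑ j, b.repr v j • b j) = ∑ j, b.repr v j • mulVecE B (b j) := by
    unfold mulVecE; simp [map_sum]
  rw [hlin]
  have hb' : ∀ j, mulVecE B (b j) = hB.eigenvalues j • b j := fun j => mulVecE_basis hB j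
  simp_rw [hb']
  simp only [mulVecE_basis hB, map_sum, map_smul]
  simp only [b.repr_self]
  have : (∑ x : Fin n, b.repr v x • hB.eigenvalues x • EuclideanSpace.single x (1:ℝ)) i
      = ∑ x : Fin n, (b.repr v x • hB.eigenvalues x • EuclideanSpace.single x (1:ℝ)) i :=
    by rw [WithLp.ofLp_sum, Finset.sum_apply]
  rw [this]
  simp [EuclideanSpace.single_apply, mul_comm]

lemma euclid_inner_sum {n : ℕ} (u w : EuclideanSpace ℝ (Fin n)) : ⟪u, w⟫ = ∑ i, u i * w i := by
  simp [PiLp.inner_apply]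
  exact Finset.sum_congr rfl fun i _ => mul_comm _ _

lemma spec_bounds {n : ℕ} {B : Matrix (Fin n) (Fin n) ℝ} (hB : B.IsHermitian)
    {c C : ℝ} (hc : 0 < c) (hC : 0 < C) (h : ∀ i, hB.eigenvalues i ∈ Set.Icc c C)
    (v : EuclideanSpace ℝ (Fin n)) :
    c * ‖v‖ ^ 2 ≤ ⟪mulVecE B v, v⟫ ∧ ‖mulVecE B v‖ ^ 2 ≤ C * ⟪mulVecE B v, v⟫ := by
  set b := hB.eigenvectorBasis with hb
  set a : Fin n → ℝ := fun i => b.repr v i with ha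
  have hrepr : ∀ i, b.repr (mulVecE B v) i = hB.eigenvalues i * a i := repr_mulVecE hB v
  have hinner : ⟪mulVecE B v, v⟫ = ∑ i, hB.eigenvalues i * (a i)^2 := by
    rw [← b.repr.inner_map_map (mulVecE B v) v, euclid_inner_sum]
    exact Finset.sum_congr rfl fun i _ => by rw [hrepr]; ring
  have hnv : ‖v‖^2 = ∑ i, (a i)^2 := by
    rw [← real_inner_self_eq_norm_sq, ← b.repr.inner_map_map v v, euclid_inner_sum]
    exact Finset.sum_congr rfl fun i _ => by ring
  have hnBv : ‖mulVecE B v‖^2 = ∑ i, (hB.eigenvalues i)^2 * (a i)^2 := by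
    rw [← real_inner_self_eq_norm_sq, ← b.repr.inner_map_map _ _, euclid_inner_sum]
    exact Finset.sum_congr rfl fun i _ => by rw [hrepr]; ring
  constructor
  · rw [hinner, hnv, Finset.mul_sum]
    refine Finset.sum_le_sum fun i _ => ?_
    have := (h i).1
    nlinarith [sq_nonneg (a i)]
  · rw [hnBv, hinner, Finset.mul_sum]
    refine Finset.sum_le_sum fun i _ => ?_
    have h1 := (h i).1; have h2 := (h i).2
    nlinarith [mul_nonneg (mul_nonneg (hc.trans_le h1).le (sub_nonneg.2 h2)) (sq_nonneg (a i))]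

lemma descent {n : ℕ} {f : EuclideanSpace ℝ (Fin n) → ℝ} (hf : ContDiff ℝ 1 f)
    {L : ℝ} (hL : 0 ≤ L)
    (hlip : ∀ x y, ‖gradient f x - gradient f y‖ ≤ L * ‖x - y‖)
    (x y : EuclideanSpace ℝ (Fin n)) :
    f y ≤ f x + ⟪gradient f x, y - x⟫ + L / 2 * ‖y - x‖ ^ 2 := by
  set γ : ℝ → EuclideanSpace ℝ (Fin n) := fun t => x + t • (y - x) with hγdef
  set φ : ℝ → ℝ := fun t => ⟪gradient f (γ t), y - x⟫ with hφdef
  have hdiff : Differentiable ℝ f := hf.differentiable one_ne_zero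
  have hγc : Continuous γ := by fun_prop
  have hgradc : Continuous (gradient f) := by
    have h1 : Continuous (fderiv ℝ f) := hf.continuous_fderiv one_ne_zero
    have : gradient f = fun z => (InnerProductSpace.toDual ℝ _).symm (fderiv ℝ f z) := rfl
    rw [this]
    exact (InnerProductSpace.toDual ℝ _).symm.continuous.comp h1
  have hφc : Continuous φ := by
    apply Continuous.inner (hgradc.comp hγc) continuous_const
  have hderiv : ∀ t : ℝ, HasDerivAt (fun s => f (γ s)) (φ t) t := by
    intro t
    have hγ' : HasDerivAt γ (y - x) t := by
      simpa [γ] using ((hasDerivAt_id t).smul_const (y - x)).const_add x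
    have hg : HasGradientAt f (gradient f (γ t)) (γ t) :=
      (hdiff (γ t)).hasGradientAt
    have hfd := hg.hasFDerivAt
    have := hfd.comp_hasDerivAt t hγ'
    simpa [φ, Function.comp_def, InnerProductSpace.toDual_apply_apply] using this
  have hint : f (γ 1) - f (γ 0) = ∫ t in (0:ℝ)..1, φ t := by
    rw [intervalIntegral.integral_eq_sub_of_hasDerivAt (fun t _ => hderiv t)
      (hφc.intervalIntegrable 0 1)]
  have hbound : ∫ t in (0:ℝ)..1, φ t ≤ ∫ t in (0:ℝ)..1, (φ 0 + L * ‖y - x‖ ^ 2 * t) := by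
    apply intervalIntegral.integral_mono_on zero_le_one (hφc.intervalIntegrable 0 1)
      ((by fun_prop : Continuous fun t : ℝ => φ 0 + L * ‖y - x‖ ^ 2 * t).intervalIntegrable 0 1)
    intro t ht
    obtain ⟨ht0, ht1⟩ := ht
    have key : φ t - φ 0 ≤ L * ‖y - x‖ ^ 2 * t := by
      have h1 : φ t - φ 0 = ⟪gradient f (γ t) - gradient f (γ 0), y - x⟫ := by
        simp [φ, inner_sub_left]
      have h2 : ⟪gradient f (γ t) - gradient f (γ 0), y - x⟫
          ≤ ‖gradient f (γ t) - gradient f (γ 0)‖ * ‖y - x‖ := real_inner_le_norm _ _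
      have h3 : ‖gradient f (γ t) - gradient f (γ 0)‖ ≤ L * (t * ‖y - x‖) := by
        have := hlip (γ t) (γ 0)
        have hns : ‖γ t - γ 0‖ = t * ‖y - x‖ := by
          simp [γ, norm_smul, abs_of_nonneg ht0]
        rwa [hns] at this
      calc φ t - φ 0 ≤ ‖gradient f (γ t) - gradient f (γ 0)‖ * ‖y - x‖ := h1 ▸ h2
        _ ≤ L * (t * ‖y - x‖) * ‖y - x‖ := by
            apply mul_le_mul_of_nonneg_right h3 (norm_nonneg _)
        _ = L * ‖y - x‖ ^ 2 * t := by ring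
    linarith
  have hrhs : ∫ t in (0:ℝ)..1, (φ 0 + L * ‖y - x‖ ^ 2 * t) = φ 0 + L / 2 * ‖y - x‖ ^ 2 := by
    rw [intervalIntegral.integral_add (intervalIntegrable_const)
      ((by fun_prop : Continuous fun t : ℝ => L * ‖y - x‖ ^ 2 * t).intervalIntegrable 0 1)]
    rw [intervalIntegral.integral_const_mul, integral_id, intervalIntegral.integral_const]
    norm_num
    ring
  have hγ0 : γ 0 = x := by simp [γ]
  have hγ1 : γ 1 = y := by simp [γ]
  have hφ0 : φ 0 = ⟪gradient f x, y - x⟫ := by simp [φ, hγ0]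
  have := hint.le.trans (by linarith [hbound, hrhs.le] : ∫ t in (0:ℝ)..1, φ t ≤ φ 0 + L / 2 * ‖y - x‖ ^ 2)
  rw [hγ0, hγ1, hφ0] at this
  linarith

/-- summability of `⟨B_k ∇f(x_k), ∇f(x_k)⟩` along the preconditioned
gradient iteration. -/
theorem stmt_2 {n : ℕ} (f : EuclideanSpace ℝ (Fin n) → ℝ)
    (hf : ContDiff ℝ 1 f) (hbdd : BddBelow (Set.range f))
    (L : ℝ) (hL : 0 < L)
    (hlip : ∀ x y, ‖gradient f x - gradient f y‖ ≤ L * ‖x - y‖)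
    (c C : ℝ) (hc : 0 < c) (hC : 0 < C)
    (B : ℕ → Matrix (Fin n) (Fin n) ℝ)
    (hBsymm : ∀ k, (B k).IsHermitian)
    (heig : ∀ k i, (hBsymm k).eigenvalues i ∈ Set.Icc c C)
    (γ : ℝ) (hγ : 0 < γ) (hγlt : γ < 2 / (C * L))
    (x : ℕ → EuclideanSpace ℝ (Fin n))
    (hx : ∀ k, x (k + 1) = x k - γ • mulVecE (B k) (gradient f (x k))) :
    Summable (fun k => ⟪mulVecE (B k) (gradient f (x k)), gradient f (x k)⟫) := by
  set g : ℕ → EuclideanSpace ℝ (Fin n) := fun k => gradient f (x k) with hg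
  set s : ℕ → ℝ := fun k => ⟪mulVecE (B k) (g k), g k⟫ with hs
  have hspec := fun k => spec_bounds (hBsymm k) hc hC (heig k) (g k)
  have hs_nonneg : ∀ k, 0 ≤ s k := fun k =>
    le_trans (by positivity) (hspec k).1
  set α : ℝ := γ * (1 - L * γ * C / 2) with hα
  have hα_pos : 0 < α := by
    have h2 : γ * (C * L) < 2 := by
      rw [lt_div_iff₀ (by positivity)] at hγlt
      linarith
    have : L * γ * C / 2 < 1 := by nlinarith
    exact mul_pos hγ (by linarith)
  have hstep : ∀ k, α * s k ≤ f (x k) - f (x (k + 1)) := by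
    intro k
    have hd := descent hf hL.le hlip (x k) (x (k + 1))
    rw [hx k] at hd ⊢
    have hyx : x k - γ • mulVecE (B k) (g k) - x k = -(γ • mulVecE (B k) (g k)) := by
      abel
    rw [hyx] at hd
    have h1 : ⟪g k, -(γ • mulVecE (B k) (g k))⟫ = -(γ * s k) := by
      rw [inner_neg_right, real_inner_smul_right, real_inner_comm]
    have h2 : ‖-(γ • mulVecE (B k) (g k))‖ ^ 2 = γ ^ 2 * ‖mulVecE (B k) (g k)‖ ^ 2 := by
      rw [norm_neg, norm_smul]
      simp [abs_of_pos hγ]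
      ring
    rw [h1, h2] at hd
    have h3 := (hspec k).2
    have h4 : 0 ≤ L / 2 * γ ^ 2 := by positivity
    nlinarith [mul_le_mul_of_nonneg_left h3 h4]
  obtain ⟨m, hm⟩ := hbdd
  have hm' : ∀ z, m ≤ f z := fun z => hm ⟨z, rfl⟩
  have hsum_bound : ∀ N, ∑ k ∈ Finset.range N, s k ≤ (f (x 0) - m) / α := by
    intro N
    have h1 : α * ∑ k ∈ Finset.range N, s k ≤ f (x 0) - f (x N) := by
      rw [Finset.mul_sum, ← Finset.sum_range_sub' (fun k => f (x k)) N]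
      exact Finset.sum_le_sum fun k _ => hstep k
    rw [le_div_iff₀ hα_pos, mul_comm]
    linarith [hm' (x N)]
  exact summable_of_sum_range_le hs_nonneg hsum_bound
end

section
/- Let n ∈ ℕ, let f : ℝⁿ → ℝ be continuously differentiable, bounded below, with L-Lipschitz continuous gradient (L > 0). Let c, C > 0, let (B_k)_{k∈ℕ} be real symmetric n×n matrices whose eigenvalues all lie in [c, C], let 0 < γ < 2/(C·L), and define x_{k+1} = x_k − γ·B_k·∇f(x_k) from any x_0 ∈ ℝⁿ. Then ∑_{k=0}^{∞} ‖∇f(x_k)‖² < ∞. -/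
open scoped RealInnerProductSpace
open Filter

section helpers

variable {n : ℕ}

lemma repr_mulVecE_s3 {A : Matrix (Fin n) (Fin n) ℝ} (hA : A.IsHermitian)
    (v : EuclideanSpace ℝ (Fin n)) (i : Fin n) :
    hA.eigenvectorBasis.repr (mulVecE A v) i
      = hA.eigenvalues i * hA.eigenvectorBasis.repr v i := by
  set b := hA.eigenvectorBasis with hbdef
  set T := Matrix.toEuclideanLin A with hT
  have hmv : ∀ w, mulVecE A w = T w := fun _ => rfl
  have hb : ∀ j, T (b j) = hA.eigenvalues j • b j := by
    intro j
    apply PiLp.ext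
    intro i
    show (Matrix.toEuclideanLin A (b j)) i = _
    rw [Matrix.toEuclideanLin_apply]
    have := congrFun (hA.mulVec_eigenvectorBasis j) i
    simpa [hbdef] using this
  rw [hmv]
  conv_lhs => rw [← b.sum_repr v]
  rw [map_sum, map_sum]
  simp only [map_smul, hb, LinearIsometryEquiv.map_smul, b.repr_self]
  rw [show ((∑ x : Fin n, b.repr v x • hA.eigenvalues x • EuclideanSpace.single x (1:ℝ)) i) = ∑ x : Fin n, (b.repr v x • hA.eigenvalues x • EuclideanSpace.single x (1:ℝ)) i from by rw [WithLp.ofLp_sum, Finset.sum_apply]]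
  simp [EuclideanSpace.single_apply, Finset.sum_ite_eq, mul_comm, mul_left_comm]

lemma inner_repr (b : OrthonormalBasis (Fin n) ℝ (EuclideanSpace ℝ (Fin n)))
    (v w : EuclideanSpace ℝ (Fin n)) :
    ⟪v, w⟫ = ∑ i, b.repr v i * b.repr w i :=
  calc ⟪v, w⟫ = ⟪b.repr v, b.repr w⟫ := (b.repr.inner_map_map v w).symm
  _ = ∑ i, b.repr v i * b.repr w i := by
      rw [PiLp.inner_apply]; simp [RCLike.inner_apply, mul_comm]

lemma inner_mulVecE_ge {A : Matrix (Fin n) (Fin n) ℝ} (hA : A.IsHermitian)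
    {c : ℝ} (hc : ∀ i, c ≤ hA.eigenvalues i) (v : EuclideanSpace ℝ (Fin n)) :
    c * ‖v‖ ^ 2 ≤ ⟪v, mulVecE A v⟫ := by
  set b := hA.eigenvectorBasis
  rw [inner_repr b, ← real_inner_self_eq_norm_sq, inner_repr b]
  simp only [b, repr_mulVecE_s3 hA]
  rw [Finset.mul_sum]
  apply Finset.sum_le_sum
  intro i _
  have h1 := hc i
  have h2 : (0:ℝ) ≤ b.repr v i * b.repr v i := mul_self_nonneg _
  nlinarith

lemma norm_mulVecE_sq_le {A : Matrix (Fin n) (Fin n) ℝ} (hA : A.IsHermitian)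
    {c C : ℝ} (hc : 0 < c) (heig : ∀ i, hA.eigenvalues i ∈ Set.Icc c C)
    (v : EuclideanSpace ℝ (Fin n)) :
    ‖mulVecE A v‖ ^ 2 ≤ C * ⟪v, mulVecE A v⟫ := by
  set b := hA.eigenvectorBasis
  rw [← real_inner_self_eq_norm_sq, inner_repr b, inner_repr b]
  simp only [b, repr_mulVecE_s3 hA]
  rw [Finset.mul_sum]
  apply Finset.sum_le_sum
  intro i _
  obtain ⟨h1, h2⟩ := heig i
  have h3 : (0:ℝ) ≤ b.repr v i * b.repr v i := mul_self_nonneg _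
  nlinarith

/-- The descent lemma. -/
lemma descent_lemma {n : ℕ} (f : EuclideanSpace ℝ (Fin n) → ℝ)
    (hf : ContDiff ℝ 1 f) (L : ℝ) (hL : 0 ≤ L)
    (hlip : ∀ x y, ‖gradient f x - gradient f y‖ ≤ L * ‖x - y‖)
    (x y : EuclideanSpace ℝ (Fin n)) :
    f y ≤ f x + ⟪gradient f x, y - x⟫ + L / 2 * ‖y - x‖ ^ 2 := by
  have hdiff : Differentiable ℝ f := hf.differentiable one_ne_zero
  have hgc : Continuous (fun z => gradient f z) := by
    have : Continuous (fun z => fderiv ℝ f z) := hf.continuous_fderiv one_ne_zero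
    exact (InnerProductSpace.toDual ℝ _).symm.continuous.comp this
  set γ : ℝ → EuclideanSpace ℝ (Fin n) := fun t => x + t • (y - x) with hγdef
  have hγc : Continuous γ := by continuity
  have hderiv : ∀ t : ℝ, HasDerivAt (fun s => f (γ s)) (⟪gradient f (γ t), y - x⟫) t := by
    intro t
    have h1 : HasDerivAt γ (y - x) t := by
      have : HasDerivAt (fun s : ℝ => s • (y - x)) ((1:ℝ) • (y - x)) t :=
        (hasDerivAt_id t).smul_const (y - x)
      simpa [hγdef] using this.const_add x
    have h2 : HasFDerivAt f (InnerProductSpace.toDual ℝ _ (gradient f (γ t))) (γ t) :=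
      (hdiff (γ t)).hasGradientAt.hasFDerivAt
    have := h2.comp_hasDerivAt t h1
    simp at this ⊢; exact this
  have hcont : Continuous (fun t : ℝ => ⟪gradient f (γ t), y - x⟫) :=
    (hgc.comp hγc).inner continuous_const
  have hFTC : f y - f x = ∫ t in (0:ℝ)..1, ⟪gradient f (γ t), y - x⟫ := by
    have h := intervalIntegral.integral_eq_sub_of_hasDerivAt
      (f := fun s => f (γ s)) (a := (0:ℝ)) (b := 1)
      (fun t _ => hderiv t) (hcont.intervalIntegrable 0 1)
    have h1 : γ 1 = y := by simp [hγdef]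
    have h0 : γ 0 = x := by simp [hγdef]
    rw [h]
    show f y - f x = f (γ 1) - f (γ 0)
    rw [h1, h0]
  set a : ℝ := ⟪gradient f x, y - x⟫ with ha
  set bb : ℝ := L * ‖y - x‖ ^ 2 with hbb
  have hbound : ∀ t ∈ Set.Icc (0:ℝ) 1,
      ⟪gradient f (γ t), y - x⟫ ≤ a + bb * t := by
    intro t ht
    have h1 : ⟪gradient f (γ t), y - x⟫ - a
        = ⟪gradient f (γ t) - gradient f x, y - x⟫ := by
      rw [ha, inner_sub_left]
    have h2 : ⟪gradient f (γ t) - gradient f x, y - x⟫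
        ≤ ‖gradient f (γ t) - gradient f x‖ * ‖y - x‖ := real_inner_le_norm _ _
    have h3 : ‖gradient f (γ t) - gradient f x‖ ≤ L * ‖γ t - x‖ := hlip _ _
    have h4 : γ t - x = t • (y - x) := by simp [hγdef]
    have h5 : ‖γ t - x‖ = t * ‖y - x‖ := by
      rw [h4, norm_smul, Real.norm_eq_abs, abs_of_nonneg ht.1]
    have h6 : ‖gradient f (γ t) - gradient f x‖ * ‖y - x‖
        ≤ (L * (t * ‖y - x‖)) * ‖y - x‖ := by
      apply mul_le_mul_of_nonneg_right _ (norm_nonneg _)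
      rw [← h5]; exact h3
    have : (L * (t * ‖y - x‖)) * ‖y - x‖ = bb * t := by rw [hbb]; ring
    linarith [h1, h2, h6, this.le, this.ge]
  have hintegr2 : IntervalIntegrable (fun t : ℝ => a + bb * t) MeasureTheory.volume 0 1 :=
    (Continuous.intervalIntegrable (by fun_prop) 0 1)
  have hint : (∫ t in (0:ℝ)..1, ⟪gradient f (γ t), y - x⟫)
      ≤ ∫ t in (0:ℝ)..1, (a + bb * t) := by
    apply intervalIntegral.integral_mono_on (by norm_num)
      (hcont.intervalIntegrable 0 1) hintegr2 hbound
  have hrhs : (∫ t in (0:ℝ)..1, (a + bb * t)) = a + bb / 2 := by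
    rw [intervalIntegral.integral_add
      (Continuous.intervalIntegrable continuous_const 0 1)
      (Continuous.intervalIntegrable (by fun_prop) 0 1),
      intervalIntegral.integral_const_mul, integral_id]
    simp
    ring
  have : bb / 2 = L / 2 * ‖y - x‖ ^ 2 := by rw [hbb]; ring
  linarith [hFTC, hint.trans_eq hrhs]

end helpers

/-- summability of `‖∇f(x_k)‖²` along the preconditioned
gradient iteration. -/
theorem stmt_3 {n : ℕ} (f : EuclideanSpace ℝ (Fin n) → ℝ)
    (hf : ContDiff ℝ 1 f) (hbdd : BddBelow (Set.range f))
    (L : ℝ) (hL : 0 < L)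
    (hlip : ∀ x y, ‖gradient f x - gradient f y‖ ≤ L * ‖x - y‖)
    (c C : ℝ) (hc : 0 < c) (hC : 0 < C)
    (B : ℕ → Matrix (Fin n) (Fin n) ℝ)
    (hBsymm : ∀ k, (B k).IsHermitian)
    (heig : ∀ k i, (hBsymm k).eigenvalues i ∈ Set.Icc c C)
    (γ : ℝ) (hγ : 0 < γ) (hγlt : γ < 2 / (C * L))
    (x : ℕ → EuclideanSpace ℝ (Fin n))
    (hx : ∀ k, x (k + 1) = x k - γ • mulVecE (B k) (gradient f (x k))) :
    Summable (fun k => ‖gradient f (x k)‖ ^ 2) := by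
  set g : ℕ → EuclideanSpace ℝ (Fin n) := fun k => gradient f (x k) with hg
  set d : ℕ → EuclideanSpace ℝ (Fin n) := fun k => mulVecE (B k) (g k) with hd
  set ε : ℝ := γ * (1 - L * γ * C / 2) * c with hε
  have hγCL : γ * (C * L) < 2 := by
    rw [lt_div_iff₀ (by positivity)] at hγlt
    linarith
  have hcoeff : 0 < 1 - L * γ * C / 2 := by nlinarith
  have hεpos : 0 < ε := by
    rw [hε]; positivity
  have hstep : ∀ k, ε * ‖g k‖ ^ 2 ≤ f (x k) - f (x (k + 1)) := by
    intro k
    have hdLem := descent_lemma f hf L hL.le hlip (x k) (x (k + 1))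
    have hxk : x (k + 1) - x k = -(γ • d k) := by rw [hx k]; abel
    have hinner : ⟪g k, x (k + 1) - x k⟫ = -(γ * ⟪g k, d k⟫) := by
      rw [hxk, inner_neg_right, real_inner_smul_right]
    have hnorm : ‖x (k + 1) - x k‖ ^ 2 = γ ^ 2 * ‖d k‖ ^ 2 := by
      rw [hxk, norm_neg, norm_smul, Real.norm_eq_abs, abs_of_nonneg hγ.le, mul_pow]
    rw [hinner, hnorm] at hdLem
    have h1 : c * ‖g k‖ ^ 2 ≤ ⟪g k, d k⟫ :=
      inner_mulVecE_ge (hBsymm k) (fun i => (heig k i).1) (g k)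
    have h2 : ‖d k‖ ^ 2 ≤ C * ⟪g k, d k⟫ :=
      norm_mulVecE_sq_le (hBsymm k) hc (heig k) (g k)
    have hA : (L / 2) * γ ^ 2 * ‖d k‖ ^ 2 ≤ (L / 2) * γ ^ 2 * (C * ⟪g k, d k⟫) :=
      mul_le_mul_of_nonneg_left h2 (by positivity)
    have hB' : (γ * (1 - L * γ * C / 2)) * (c * ‖g k‖ ^ 2)
        ≤ (γ * (1 - L * γ * C / 2)) * ⟪g k, d k⟫ :=
      mul_le_mul_of_nonneg_left h1 (by positivity)
    nlinarith [hdLem, hA, hB']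
  obtain ⟨m, hm⟩ := hbdd
  have hnonneg : ∀ k : ℕ, (0:ℝ) ≤ ‖g k‖ ^ 2 := fun k => sq_nonneg _
  have hsum : ∀ N, ∑ k ∈ Finset.range N, ‖g k‖ ^ 2 ≤ (f (x 0) - m) / ε := by
    intro N
    have htel : ∑ k ∈ Finset.range N, (f (x k) - f (x (k + 1))) = f (x 0) - f (x N) :=
      Finset.sum_range_sub' (fun k => f (x k)) N
    have h1 : ε * ∑ k ∈ Finset.range N, ‖g k‖ ^ 2 ≤ f (x 0) - f (x N) := by
      rw [Finset.mul_sum, ← htel]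
      exact Finset.sum_le_sum (fun k _ => hstep k)
    have h2 : m ≤ f (x N) := hm ⟨x N, rfl⟩
    rw [le_div_iff₀ hεpos]
    nlinarith
  exact summable_of_sum_range_le hnonneg hsum
end

section
/- Let n ∈ ℕ, let f : ℝⁿ → ℝ be differentiable, let β₁, β₂ ∈ [0,1), γ > 0, and let σ be a permutation of the index set {1,…,n}, inducing the permutation map P on ℝⁿ given by (P·x)_i = x_{σ⁻¹(i)}. Define f̂(y) = f(P⁻¹·y). Define the ADAM iterates for f by m_k = β₁·m_{k−1} + (1−β₁)·∇f(x_k), v²_k = β₂·v²_{k−1} + (1−β₂)·∇f(x_k)⊙∇f(x_k), x_{k+1} = x_k − γ·m_k/√(v²_k) (all operations coordinatewise), starting from x_0, m_{−1}, v²_{−1}, and define ADAM iterates for f̂ starting from x̂_0 = P·x_0, m̂_{−1} = P·m_{−1}, v̂²_{−1} = P·v²_{−1}. Assume every coordinate of v²_k is strictly positive for every k ≥ 0. Then x̂_k = P·x_k, m̂_k = P·m_k and v̂²_k = P·v²_k for all k. -/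
open scoped RealInnerProductSpace
open Filter

/-- Element-wise (Hadamard) product of two vectors. -/
noncomputable def evMul {n : ℕ} (u w : EuclideanSpace ℝ (Fin n)) :
    EuclideanSpace ℝ (Fin n) := WithLp.toLp 2 (fun i => u i * w i)

/-- Element-wise quotient of two vectors. -/
noncomputable def evDiv {n : ℕ} (u w : EuclideanSpace ℝ (Fin n)) :
    EuclideanSpace ℝ (Fin n) := WithLp.toLp 2 (fun i => u i / w i)

/-- Element-wise square root of a vector. -/
noncomputable def evSqrt {n : ℕ} (u : EuclideanSpace ℝ (Fin n)) :
    EuclideanSpace ℝ (Fin n) := WithLp.toLp 2 (fun i => Real.sqrt (u i))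

/-- The coordinate-permutation map `P` on `ℝⁿ` induced by a permutation `σ`:
`(P x) i = x (σ⁻¹ i)`. -/
noncomputable def permE {n : ℕ} (σ : Equiv.Perm (Fin n))
    (u : EuclideanSpace ℝ (Fin n)) : EuclideanSpace ℝ (Fin n) :=
  WithLp.toLp 2 (fun i => u (σ.symm i))

noncomputable def permLIE {n : ℕ} (σ : Equiv.Perm (Fin n)) :
    EuclideanSpace ℝ (Fin n) ≃ₗᵢ[ℝ] EuclideanSpace ℝ (Fin n) :=
  LinearIsometryEquiv.piLpCongrLeft 2 ℝ ℝ σ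

lemma permLIE_eq {n : ℕ} (σ : Equiv.Perm (Fin n)) (u : EuclideanSpace ℝ (Fin n)) :
    permLIE σ u = permE σ u := by
  ext i
  simp [permLIE, permE, LinearIsometryEquiv.piLpCongrLeft_apply, Equiv.piCongrLeft']

lemma grad_perm {n : ℕ} (σ : Equiv.Perm (Fin n))
    (f fhat : EuclideanSpace ℝ (Fin n) → ℝ) (hf : Differentiable ℝ f)
    (hfhat : ∀ y, fhat y = f (permE σ.symm y)) (x : EuclideanSpace ℝ (Fin n)) :
    gradient fhat (permE σ x) = permE σ (gradient f x) := by
  set e := permLIE σ with he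
  have hsymm : ∀ y, (e.symm : _ → _) y = permE σ.symm y := by
    intro y
    rw [he, permLIE, LinearIsometryEquiv.piLpCongrLeft_symm]
    exact permLIE_eq σ.symm y
  have hcomp : fhat = f ∘ e.symm := by
    funext y; rw [hfhat]; simp [hsymm]
  have hg : HasGradientAt f (gradient f x) x := (hf x).hasGradientAt
  have hfd : HasFDerivAt f (InnerProductSpace.toDual ℝ _ (gradient f x) :
      EuclideanSpace ℝ (Fin n) →L[ℝ] ℝ) x := hg.hasFDerivAt
  have hfd2 : HasFDerivAt (f ∘ ⇑e.symm)
      (((InnerProductSpace.toDual ℝ _ (gradient f x) :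
        EuclideanSpace ℝ (Fin n) →L[ℝ] ℝ)).comp
        (e.symm : EuclideanSpace ℝ (Fin n) →L[ℝ] EuclideanSpace ℝ (Fin n))) (e x) := by
    have h3 : HasFDerivAt f (InnerProductSpace.toDual ℝ _ (gradient f x) :
        EuclideanSpace ℝ (Fin n) →L[ℝ] ℝ) (e.symm.toContinuousLinearEquiv (e x)) := by
      simpa using hfd
    have := h3.comp (e x) (e.symm.toContinuousLinearEquiv.hasFDerivAt (x := e x))
    simpa using this
  have hkey : ((InnerProductSpace.toDual ℝ _ (gradient f x) :
        EuclideanSpace ℝ (Fin n) →L[ℝ] ℝ)).comp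
        (e.symm : EuclideanSpace ℝ (Fin n) →L[ℝ] EuclideanSpace ℝ (Fin n)) =
      (InnerProductSpace.toDual ℝ _ (e (gradient f x)) :
        EuclideanSpace ℝ (Fin n) →L[ℝ] ℝ) := by
    ext v
    simp [InnerProductSpace.toDual_apply_apply, -toDual_gradient, -inner_gradient_left]
    calc ⟪gradient f x, e.symm v⟫ = ⟪e (gradient f x), e (e.symm v)⟫ := by
          rw [e.inner_map_map]
      _ = ⟪e (gradient f x), v⟫ := by simp
  rw [hkey] at hfd2
  have : HasGradientAt fhat (e (gradient f x)) (e x) := by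
    rw [hcomp]
    exact hasGradientAt_iff_hasFDerivAt.mpr hfd2
  have h4 := this.gradient
  rw [permLIE_eq] at h4
  rw [h4]
  exact permLIE_eq σ _

/-- permutation equivariance of the ADAM iterates.
The sequences `m`, `v2` are indexed by `ℕ` with an index shift:
`m 0 = m_{-1}`, `v2 0 = v²_{-1}`, and `m (k+1)`, `v2 (k+1)` represent
`m_k`, `v²_k`; `x k` represents `x_k`. -/
theorem stmt_14 {n : ℕ} (f : EuclideanSpace ℝ (Fin n) → ℝ)
    (hf : Differentiable ℝ f)
    (β₁ β₂ γ : ℝ) (hβ₁ : β₁ ∈ Set.Ico (0 : ℝ) 1) (hβ₂ : β₂ ∈ Set.Ico (0 : ℝ) 1)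
    (hγ : 0 < γ)
    (σ : Equiv.Perm (Fin n))
    (fhat : EuclideanSpace ℝ (Fin n) → ℝ)
    (hfhat : ∀ y, fhat y = f (permE σ.symm y))
    (x m v2 xhat mhat v2hat : ℕ → EuclideanSpace ℝ (Fin n))
    (hm : ∀ k, m (k + 1) = β₁ • m k + (1 - β₁) • gradient f (x k))
    (hv : ∀ k, v2 (k + 1) =
      β₂ • v2 k + (1 - β₂) • evMul (gradient f (x k)) (gradient f (x k)))
    (hx : ∀ k, x (k + 1) = x k - γ • evDiv (m (k + 1)) (evSqrt (v2 (k + 1))))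
    (hmhat : ∀ k, mhat (k + 1) = β₁ • mhat k + (1 - β₁) • gradient fhat (xhat k))
    (hvhat : ∀ k, v2hat (k + 1) =
      β₂ • v2hat k + (1 - β₂) • evMul (gradient fhat (xhat k)) (gradient fhat (xhat k)))
    (hxhat : ∀ k, xhat (k + 1) =
      xhat k - γ • evDiv (mhat (k + 1)) (evSqrt (v2hat (k + 1))))
    (hpos : ∀ k i, 0 < v2 (k + 1) i)
    (h0x : xhat 0 = permE σ (x 0))
    (h0m : mhat 0 = permE σ (m 0))
    (h0v : v2hat 0 = permE σ (v2 0)) :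
    ∀ k, xhat k = permE σ (x k) ∧ mhat k = permE σ (m k) ∧
      v2hat k = permE σ (v2 k) := by
  intro k
  induction k with
  | zero => exact ⟨h0x, h0m, h0v⟩
  | succ k ih =>
    obtain ⟨ihx, ihm, ihv⟩ := ih
    have hgrad : gradient fhat (xhat k) = permE σ (gradient f (x k)) := by
      rw [ihx]; exact grad_perm σ f fhat hf hfhat (x k)
    have hm' : mhat (k + 1) = permE σ (m (k + 1)) := by
      rw [hmhat, hm, ihm, hgrad]
      ext i; simp [permE]
    have hv' : v2hat (k + 1) = permE σ (v2 (k + 1)) := by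
      rw [hvhat, hv, ihv, hgrad]
      ext i; simp [permE, evMul]
    have hx' : xhat (k + 1) = permE σ (x (k + 1)) := by
      rw [hxhat, hx, ihx, hm', hv']
      ext i; simp [permE, evDiv, evSqrt]
    exact ⟨hx', hm', hv'⟩
end

section
/- Let n ∈ ℕ, let f : ℝⁿ → ℝ be differentiable, let β₁, β₂ ∈ [0,1), γ > 0, and λ > 0. Define the ADAM iterates for f by m_k = β₁·m_{k−1} + (1−β₁)·∇f(x_k), v²_k = β₂·v²_{k−1} + (1−β₂)·∇f(x_k)⊙∇f(x_k), x_{k+1} = x_k − γ·m_k/√(v²_k) (operations coordinatewise), starting from x_0, m_{−1}, v²_{−1}, and define ADAM iterates (x̂_k, m̂_k, v̂²_k) for the rescaled function f̂ = λ·f with the same β₁, β₂, γ, starting from x̂_0 = x_0, m̂_{−1} = λ·m_{−1}, v̂²_{−1} = λ²·v²_{−1}. Assume every coordinate of v²_k is strictly positive for every k ≥ 0. Then for all k: x̂_k = x_k, m̂_k = λ·m_k, and v̂²_k = λ²·v²_k; in particular the ADAM iterates are invariant to rescaling of the objective function. -/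
open scoped RealInnerProductSpace
open Filter

lemma gradient_lam_smul {n : ℕ} (f : EuclideanSpace ℝ (Fin n) → ℝ)
    (hf : Differentiable ℝ f) (lam : ℝ)
    (fhat : EuclideanSpace ℝ (Fin n) → ℝ) (hfhat : ∀ y, fhat y = lam * f y)
    (y : EuclideanSpace ℝ (Fin n)) :
    gradient fhat y = lam • gradient f y := by
  have h1 : fhat = fun z => lam * f z := funext hfhat
  rw [gradient, gradient, h1, fderiv_const_mul (hf y)]
  simp [map_smul]

/-- invariance of the ADAM iterates to rescaling of the
objective function. The sequences `m`, `v2` are indexed by `ℕ` with an index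
shift: `m 0 = m_{-1}`, `v2 0 = v²_{-1}`, and `m (k+1)`, `v2 (k+1)` represent
`m_k`, `v²_k`; `x k` represents `x_k`. -/
theorem stmt_15 {n : ℕ} (f : EuclideanSpace ℝ (Fin n) → ℝ)
    (hf : Differentiable ℝ f)
    (β₁ β₂ γ : ℝ) (hβ₁ : β₁ ∈ Set.Ico (0 : ℝ) 1) (hβ₂ : β₂ ∈ Set.Ico (0 : ℝ) 1)
    (hγ : 0 < γ)
    (lam : ℝ) (hlam : 0 < lam)
    (fhat : EuclideanSpace ℝ (Fin n) → ℝ)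
    (hfhat : ∀ y, fhat y = lam * f y)
    (x m v2 xhat mhat v2hat : ℕ → EuclideanSpace ℝ (Fin n))
    (hm : ∀ k, m (k + 1) = β₁ • m k + (1 - β₁) • gradient f (x k))
    (hv : ∀ k, v2 (k + 1) =
      β₂ • v2 k + (1 - β₂) • evMul (gradient f (x k)) (gradient f (x k)))
    (hx : ∀ k, x (k + 1) = x k - γ • evDiv (m (k + 1)) (evSqrt (v2 (k + 1))))
    (hmhat : ∀ k, mhat (k + 1) = β₁ • mhat k + (1 - β₁) • gradient fhat (xhat k))
    (hvhat : ∀ k, v2hat (k + 1) =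
      β₂ • v2hat k + (1 - β₂) • evMul (gradient fhat (xhat k)) (gradient fhat (xhat k)))
    (hxhat : ∀ k, xhat (k + 1) =
      xhat k - γ • evDiv (mhat (k + 1)) (evSqrt (v2hat (k + 1))))
    (hpos : ∀ k i, 0 < v2 (k + 1) i)
    (h0x : xhat 0 = x 0)
    (h0m : mhat 0 = lam • m 0)
    (h0v : v2hat 0 = (lam ^ 2) • v2 0) :
    ∀ k, xhat k = x k ∧ mhat k = lam • m k ∧ v2hat k = (lam ^ 2) • v2 k := by
  have hgrad : ∀ y, gradient fhat y = lam • gradient f y :=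
    gradient_lam_smul f hf lam fhat hfhat
  have hlam0 : lam ≠ 0 := ne_of_gt hlam
  intro k
  induction k with
  | zero => exact ⟨h0x, h0m, h0v⟩
  | succ k ih =>
    obtain ⟨ihx, ihm, ihv⟩ := ih
    have hm' : mhat (k + 1) = lam • m (k + 1) := by
      rw [hmhat, hm, ihm, ihx, hgrad]
      simp [smul_add, smul_smul]
      ring_nf
    have hv' : v2hat (k + 1) = (lam ^ 2) • v2 (k + 1) := by
      rw [hvhat, hv, ihv, ihx, hgrad]
      ext i
      simp [evMul, PiLp.smul_apply, smul_eq_mul, PiLp.add_apply]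
      ring
    refine ⟨?_, hm', hv'⟩
    rw [hxhat, hx, ihx, hm', hv']
    congr 1
    congr 1
    ext i
    simp only [evDiv, evSqrt, PiLp.toLp_apply, PiLp.smul_apply, smul_eq_mul]
    rw [show lam ^ 2 * v2 (k + 1) i = (lam * Real.sqrt (v2 (k+1) i))^2 by
      rw [mul_pow, Real.sq_sqrt (hpos k i).le]]
    rw [Real.sqrt_sq (by positivity)]
    rw [mul_div_mul_left _ _ hlam0]
end

section
/- Let n ∈ ℕ, let B' be a real symmetric n×n matrix, and let d, δ, y ∈ ℝⁿ with ⟨δ, y⟩ ≠ 0. Set r = d − B'·δ and define the updated matrix B = B' + (1/⟨δ,y⟩)·[ r·yᵀ + y·rᵀ − (⟨δ,r⟩/⟨δ,y⟩)·y·yᵀ ]. Then B is symmetric and satisfies the secant equation B·δ = d. In particular, the learning-enhanced BFGS update preserves symmetry and the secant condition for any model prediction y with ⟨δ,y⟩ ≠ 0. -/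
open scoped Matrix

open Matrix in
lemma myVecMulVec_transpose {n : ℕ} (u w : Fin n → ℝ) :
    (Matrix.vecMulVec u w)ᵀ = Matrix.vecMulVec w u := by
  ext i j; simp [Matrix.vecMulVec_apply, mul_comm]

open Matrix in
lemma myVecMulVec_mulVec {n : ℕ} (u w x : Fin n → ℝ) :
    (Matrix.vecMulVec u w) *ᵥ x = (w ⬝ᵥ x) • u := by
  ext i
  simp [Matrix.mulVec, Matrix.vecMulVec_apply, dotProduct, Finset.mul_sum,
    Finset.sum_mul, mul_comm, mul_left_comm]

/-- the generalized (learning-enhanced) BFGS update preserves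
symmetry and the secant equation `B·δ = d`, for any vector `y` with `⟨δ,y⟩ ≠ 0`.
Here `⟨·,·⟩` is the standard inner (dot) product on `ℝⁿ` and `u·wᵀ` is the
rank-one outer product `Matrix.vecMulVec u w`. -/
theorem stmt_18 {n : ℕ} (B' : Matrix (Fin n) (Fin n) ℝ) (hB' : B'ᵀ = B')
    (d δ y : Fin n → ℝ) (hδy : δ ⬝ᵥ y ≠ 0)
    (r : Fin n → ℝ) (hr : r = d - B'.mulVec δ)
    (B : Matrix (Fin n) (Fin n) ℝ)
    (hB : B = B' + (δ ⬝ᵥ y)⁻¹ •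
      (Matrix.vecMulVec r y + Matrix.vecMulVec y r
        - ((δ ⬝ᵥ r) / (δ ⬝ᵥ y)) • Matrix.vecMulVec y y)) :
    Bᵀ = B ∧ B.mulVec δ = d := by
  constructor
  · subst hB
    simp [Matrix.transpose_add, Matrix.transpose_smul, Matrix.transpose_sub,
      Matrix.vecMulVec_eq, hB', Matrix.transpose_mul]
    congr 2
    abel
  · subst hB hr
    ext i
    simp [Matrix.add_mulVec, Matrix.smul_mulVec, Matrix.sub_mulVec,
      myVecMulVec_mulVec, dotProduct_comm y δ, dotProduct_comm d δ, dotProduct_comm (B' *ᵥ δ) δ, smul_smul]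
    field_simp
    ring
end
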